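/- arXiv:0710.0977 — 3 statements merged into one kernel-verified Lean document; each statement's English description precedes it below -/
import Mathlib

section
/- Let G be a Schwartz function, n, m ∈ ℕ, ε > 0, and G_ε(x) = ε⁻¹G(ε⁻¹x). Writing φ_{n,m}(x) = x^n φ^(m)(x), one has for every Schwartz φ: x^n (G_ε * φ)^(m)(x) = Σ_{k=0}^{n} C(n,k) ε^k (D_ε¹(G_{k,0}) * φ_{n-k,m})(x), where D_ε¹h(x) = ε⁻¹h(ε⁻¹x) and C(n,k) is the binomial coefficient. -/
open MeasureTheory SchwartzMap Complex

/-!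
Convolution with an integrable kernel commutes with differentiation of a Schwartz function
(dominated convergence, the derivative being bounded), so the left side is
`x^n ∫ G_ε(t) φ^{(m)}(x - t) dt`. Expanding `x^n = (t + (x - t))^n` binomially under the integral
and writing `t^k G_ε(t) = ε^k D_ε¹(G_{k,0})(t)` gives the right side.
-/

namespace SchwartzMap

section

variable {𝕜 : Type*} [RCLike 𝕜]

theorem coe_derivCLM_iterate {F : Type*} [NormedAddCommGroup F] [NormedSpace ℝ F]
    [NormedSpace 𝕜 F] (m : ℕ) (φ : 𝓢(ℝ, F)) :
    ⇑((derivCLM 𝕜 F)^[m] φ) = iteratedDeriv m φ := by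
  induction m generalizing φ with
  | zero => simp
  | succ m ih =>
    rw [Function.iterate_succ_apply, ih, iteratedDeriv_succ']
    rfl

theorem hasDerivAt_integral_mul_comp_sub {g : ℝ → 𝕜} (hg : Integrable g) (ψ : 𝓢(ℝ, 𝕜))
    (x : ℝ) :
    HasDerivAt (fun y ↦ ∫ t, g t * ψ (y - t)) (∫ t, g t * derivCLM 𝕜 𝕜 ψ (x - t)) x := by
  have hcomp : ∀ (f : 𝓢(ℝ, 𝕜)) (y : ℝ), AEStronglyMeasurable (fun t ↦ f (y - t)) :=
    fun f y ↦ (by fun_prop : Continuous fun t ↦ f (y - t)).aestronglyMeasurable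
  refine (hasDerivAt_integral_of_dominated_loc_of_deriv_le (F := fun y t ↦ g t * ψ (y - t))
    (F' := fun y t ↦ g t * derivCLM 𝕜 𝕜 ψ (y - t))
    (bound := fun t ↦ ‖g t‖ * SchwartzMap.seminorm 𝕜 0 0 (derivCLM 𝕜 𝕜 ψ))
    (Metric.ball_mem_nhds x one_pos)
    (.of_forall fun y ↦ hg.aestronglyMeasurable.mul (hcomp ψ y))
    (hg.mul_bdd (hcomp ψ x) (.of_forall fun t ↦ ψ.norm_le_seminorm 𝕜 (x - t)))
    (hg.aestronglyMeasurable.mul (hcomp _ x)) ?_ (hg.norm.mul_const _) ?_).2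
  · refine .of_forall fun t y _ ↦ ?_
    rw [norm_mul]
    exact mul_le_mul_of_nonneg_left ((derivCLM 𝕜 𝕜 ψ).norm_le_seminorm 𝕜 _) (norm_nonneg _)
  · exact .of_forall fun t y _ ↦ ((ψ.hasDerivAt (y - t)).comp_sub_const y t).const_mul (g t)

theorem iteratedDeriv_integral_mul_comp_sub {g : ℝ → 𝕜} (hg : Integrable g) (m : ℕ)
    (ψ : 𝓢(ℝ, 𝕜)) (x : ℝ) :
    iteratedDeriv m (fun y ↦ ∫ t, g t * ψ (y - t)) x
      = ∫ t, g t * iteratedDeriv m ψ (x - t) := by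
  induction m generalizing ψ with
  | zero => simp
  | succ m ih =>
    have hderiv : deriv (fun y ↦ ∫ t, g t * ψ (y - t))
        = fun y ↦ ∫ t, g t * derivCLM 𝕜 𝕜 ψ (y - t) :=
      funext fun y ↦ (hasDerivAt_integral_mul_comp_sub hg ψ y).deriv
    rw [iteratedDeriv_succ', hderiv, ih, iteratedDeriv_succ']
    rfl

end

theorem norm_ofReal_pow_mul_le_seminorm (ψ : 𝓢(ℝ, ℂ)) (k : ℕ) (x : ℝ) :
    ‖(x : ℂ) ^ k * ψ x‖ ≤ SchwartzMap.seminorm ℝ k 0 ψ := by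
  simpa [norm_mul, norm_pow] using ψ.norm_pow_mul_le_seminorm ℝ k x

theorem integrable_ofReal_pow_mul (G : 𝓢(ℝ, ℂ)) (k : ℕ) :
    Integrable (fun x : ℝ ↦ (x : ℂ) ^ k * G x) :=
  (integrable_norm_iff
    (by fun_prop : Continuous fun x : ℝ ↦ (x : ℂ) ^ k * G x).aestronglyMeasurable).1
    (by simpa [norm_mul, norm_pow] using G.integrable_pow_mul volume k)

end SchwartzMap

theorem ofReal_pow_mul_integral_mul_comp_sub {g : ℝ → ℂ}
    (hg : ∀ k, Integrable (fun t : ℝ ↦ (t : ℂ) ^ k * g t)) (ψ : 𝓢(ℝ, ℂ)) (n : ℕ) (x : ℝ) :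
    (x : ℂ) ^ n * ∫ t, g t * ψ (x - t)
      = ∑ k ∈ Finset.range (n + 1), (n.choose k : ℂ) *
          ∫ t : ℝ, (t : ℂ) ^ k * g t * (((x - t : ℝ) : ℂ) ^ (n - k) * ψ (x - t)) := by
  have hterm : ∀ k, Integrable fun t : ℝ ↦
      (n.choose k : ℂ) * ((t : ℂ) ^ k * g t * (((x - t : ℝ) : ℂ) ^ (n - k) * ψ (x - t))) :=
    fun k ↦ ((hg k).mul_bdd (Continuous.aestronglyMeasurable (by fun_prop))
      (.of_forall fun t ↦ ψ.norm_ofReal_pow_mul_le_seminorm (n - k) (x - t))).const_mul _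
  simp_rw [← integral_const_mul]
  rw [← integral_finsetSum _ fun k _ ↦ hterm k]
  congr 1 with t
  have hbinom : (x : ℂ) ^ n = ∑ k ∈ Finset.range (n + 1),
      (t : ℂ) ^ k * ((x - t : ℝ) : ℂ) ^ (n - k) * n.choose k := by
    rw [← add_pow]; push_cast; ring
  rw [hbinom, Finset.sum_mul]
  exact Finset.sum_congr rfl fun k _ ↦ by ring

theorem ofReal_pow_mul_ofReal_inv_mul_pow {ε : ℝ} (hε : ε ≠ 0) (t : ℝ) (k : ℕ) :
    (ε : ℂ) ^ k * ((ε⁻¹ * t : ℝ) : ℂ) ^ k = (t : ℂ) ^ k := by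
  rw [← mul_pow, ← ofReal_mul, mul_inv_cancel_left₀ hε]

theorem integrable_ofReal_pow_mul_dilation (G : 𝓢(ℝ, ℂ)) {ε : ℝ} (hε : ε ≠ 0) (k : ℕ) :
    Integrable (fun t : ℝ ↦ (t : ℂ) ^ k * ((ε : ℂ)⁻¹ * G (ε⁻¹ * t))) := by
  refine (((G.integrable_ofReal_pow_mul k).comp_mul_left' (inv_ne_zero hε)).const_mul
    ((ε : ℂ) ^ k * (ε : ℂ)⁻¹)).congr (.of_forall fun t ↦ ?_)
  simp only [← ofReal_pow_mul_ofReal_inv_mul_pow hε t k]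
  ring

theorem ofReal_pow_mul_integral_dilation (G : 𝓢(ℝ, ℂ)) {ε : ℝ} (hε : ε ≠ 0) (k : ℕ)
    (h : ℝ → ℂ) :
    (ε : ℂ) ^ k * ∫ t : ℝ, ((ε : ℂ)⁻¹ * (((ε⁻¹ * t : ℝ) : ℂ) ^ k * G (ε⁻¹ * t))) * h t
      = ∫ t : ℝ, (t : ℂ) ^ k * ((ε : ℂ)⁻¹ * G (ε⁻¹ * t)) * h t := by
  rw [← integral_const_mul]
  congr 1 with t
  rw [← ofReal_pow_mul_ofReal_inv_mul_pow hε t k]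
  ring

/-- for Schwartz `G, φ`, `ε > 0`, with `G_ε(x) = ε⁻¹G(ε⁻¹x)`,
`φ_{n,m}(x) = x^n φ^{(m)}(x)` and `G_{k,0}(t) = t^k G(t)`, one has
`x^n (G_ε * φ)^{(m)}(x) = ∑_{k=0}^n C(n,k) ε^k (D_ε¹(G_{k,0}) * φ_{n-k,m})(x)`. -/
theorem conv_moment_expansion
    (G φ : 𝓢(ℝ, ℂ)) (n m : ℕ) (ε : ℝ) (hε : 0 < ε) (x : ℝ) :
    (x : ℂ) ^ n *
        iteratedDeriv m (fun y : ℝ => ∫ t : ℝ, (ε⁻¹ : ℂ) * G (ε⁻¹ * t) * φ (y - t)) x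
      = ∑ k ∈ Finset.range (n + 1),
          (n.choose k : ℂ) * (ε : ℂ) ^ k *
            ∫ t : ℝ, ((ε⁻¹ : ℂ) * (((ε⁻¹ * t : ℝ) : ℂ) ^ k * G (ε⁻¹ * t))) *
              (((x - t : ℝ) : ℂ) ^ (n - k) * iteratedDeriv m (fun y : ℝ => φ y) (x - t)) := by
  have hmoments := integrable_ofReal_pow_mul_dilation G hε.ne'
  have hg : Integrable fun t : ℝ ↦ (ε⁻¹ : ℂ) * G (ε⁻¹ * t) := by simpa using hmoments 0
  rw [iteratedDeriv_integral_mul_comp_sub hg, ← coe_derivCLM_iterate (𝕜 := ℂ),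
    ofReal_pow_mul_integral_mul_comp_sub hmoments]
  refine Finset.sum_congr rfl fun k _ ↦ ?_
  rw [mul_assoc, ofReal_pow_mul_integral_dilation G hε.ne']
end

section
/- Let K ∈ L^{p'}(ℝ), α, β ∈ ℝ with α ≠ β, and 1 ≤ p ≤ ∞. Then for all f, g ∈ L^p(ℝ), the function H(f,g)(x) = ∫ f(x-αt) g(x-βt) K(t) dt satisfies ‖H(f,g)‖_p ≤ |α-β|^{-1/p} ‖f‖_p ‖g‖_p ‖K‖_{p'}. -/
/-!
Hölder's inequality in `t` bounds `‖H(f,g)(x)‖` by `‖K‖_{p'}` times the `L^p` norm in `t` of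
`t ↦ f(x-αt) g(x-βt)`, so it suffices to bound the mixed `L^p_x L^p_t` norm of this function.
For `p < ∞` its `p`-th power is at most `∬ |f(x-αt)|^p |g(x-βt)|^p dt dx`, which the change of
variables `(x,t) ↦ (x-αt, x-βt)` of Jacobian `|α-β|` turns into `|α-β|⁻¹ ‖f‖_p^p ‖g‖_p^p`.
For `p = ∞` it is at most `‖f‖_∞ ‖g‖_∞`, because for almost every `x` the map `t ↦ x-αt` pulls
null sets back to null sets.
-/

open MeasureTheory ENNReal

theorem ae_ae_comp_sub_mul {P : ℝ → Prop} (h : ∀ᵐ y, P y) (α : ℝ) :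
    ∀ᵐ x : ℝ, ∀ᵐ t : ℝ, P (x - α * t) := by
  rcases eq_or_ne α 0 with rfl | hα
  · filter_upwards [h] with x hx
    simpa using ae_of_all volume fun _ : ℝ => hx
  · refine ae_of_all _ fun x => ?_
    exact ((Measure.measurePreserving_sub_left volume x).quasiMeasurePreserving.comp
      (Measure.quasiMeasurePreserving_smul volume hα)).ae h

theorem lintegral_comp_mul_left {ψ : ℝ → ℝ≥0∞} (hψ : Measurable ψ) {c : ℝ} (hc : c ≠ 0) :
    ∫⁻ t, ψ (c * t) = ENNReal.ofReal |c|⁻¹ * ∫⁻ s, ψ s := by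
  rw [← lintegral_map hψ (measurable_const_mul c), Real.map_volume_mul_left hc,
    lintegral_smul_measure, abs_inv, smul_eq_mul]

theorem lintegral_lintegral_comp_sub_mul {φ ψ : ℝ → ℝ≥0∞} (hφ : Measurable φ)
    (hψ : Measurable ψ) {α β : ℝ} (hαβ : α ≠ β) :
    ∫⁻ x, ∫⁻ t, φ (x - α * t) * ψ (x - β * t) =
      ENNReal.ofReal |α - β|⁻¹ * (∫⁻ y, φ y) * ∫⁻ y, ψ y := by
  have hshift (t : ℝ) :
      ∫⁻ x, φ (x - α * t) * ψ (x - β * t) = ∫⁻ x, φ x * ψ (x + (α - β) * t) := by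
    rw [← lintegral_add_right_eq_self _ (α * t)]
    congr 1 with x
    rw [add_sub_cancel_right, add_sub_assoc, ← sub_mul]
  have hscale (x : ℝ) :
      ∫⁻ t, ψ (x + (α - β) * t) = ENNReal.ofReal |α - β|⁻¹ * ∫⁻ y, ψ y := by
    rw [lintegral_comp_mul_left (ψ := fun s => ψ (x + s)) (by fun_prop) (sub_ne_zero.mpr hαβ),
      lintegral_add_left_eq_self ψ x]
  calc ∫⁻ x, ∫⁻ t, φ (x - α * t) * ψ (x - β * t)
      = ∫⁻ t, ∫⁻ x, φ x * ψ (x + (α - β) * t) := by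
        rw [lintegral_lintegral_swap (by fun_prop)]
        simp_rw [hshift]
    _ = ∫⁻ x, φ x * ∫⁻ t, ψ (x + (α - β) * t) := by
        rw [lintegral_lintegral_swap (by fun_prop)]
        congr 1 with x
        exact lintegral_const_mul _ (by fun_prop)
    _ = ENNReal.ofReal |α - β|⁻¹ * (∫⁻ y, φ y) * ∫⁻ y, ψ y := by
        simp_rw [hscale]
        rw [lintegral_mul_const _ hφ]
        ring

section

variable {𝕜 : Type*} [NormedRing 𝕜]

theorem enorm_mul_le (a b : 𝕜) : ‖a * b‖ₑ ≤ ‖a‖ₑ * ‖b‖ₑ := by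
  simpa [enorm_eq_nnnorm] using ENNReal.coe_le_coe.mpr (nnnorm_mul_le a b)

theorem eLpNorm_eLpNorm_mul_comp_sub_mul_top_le (f g : ℝ → 𝕜) (α β : ℝ) :
    eLpNorm (fun x => eLpNorm (fun t => f (x - α * t) * g (x - β * t)) ∞ volume) ∞ volume
      ≤ eLpNorm f ∞ volume * eLpNorm g ∞ volume := by
  rw [eLpNorm_exponent_top]
  refine eLpNormEssSup_le_of_ae_enorm_bound ?_
  filter_upwards [ae_ae_comp_sub_mul (enorm_ae_le_eLpNormEssSup f volume) α,
    ae_ae_comp_sub_mul (enorm_ae_le_eLpNormEssSup g volume) β] with x hfx hgx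
  rw [enorm_eq_self, eLpNorm_exponent_top]
  refine eLpNormEssSup_le_of_ae_enorm_bound ?_
  filter_upwards [hfx, hgx] with t hft hgt
  rw [eLpNorm_exponent_top, eLpNorm_exponent_top]
  exact (enorm_mul_le _ _).trans (mul_le_mul' hft hgt)

theorem eLpNorm_eLpNorm_mul_comp_sub_mul_le_of_ne_top {p : ℝ≥0∞} (hp0 : p ≠ 0) (hp : p ≠ ∞)
    {f g : ℝ → 𝕜} (hf : StronglyMeasurable f) (hg : StronglyMeasurable g) {α β : ℝ}
    (hαβ : α ≠ β) :
    eLpNorm (fun x => eLpNorm (fun t => f (x - α * t) * g (x - β * t)) p volume) p volume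
      ≤ ENNReal.ofReal (|α - β| ^ (-(1 / p.toReal))) * eLpNorm f p volume * eLpNorm g p volume := by
  have hq : 0 < p.toReal := ENNReal.toReal_pos hp0 hp
  simp only [eLpNorm_eq_eLpNorm' hp0 hp]
  rw [← ENNReal.rpow_le_rpow_iff hq, ← lintegral_rpow_enorm_eq_rpow_eLpNorm' hq]
  calc ∫⁻ x, ‖eLpNorm' (fun t => f (x - α * t) * g (x - β * t)) p.toReal volume‖ₑ ^ p.toReal
      ≤ ∫⁻ x, ∫⁻ t, ‖f (x - α * t)‖ₑ ^ p.toReal * ‖g (x - β * t)‖ₑ ^ p.toReal := by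
        gcongr with x
        rw [enorm_eq_self, ← lintegral_rpow_enorm_eq_rpow_eLpNorm' hq]
        gcongr with t
        rw [← ENNReal.mul_rpow_of_nonneg _ _ hq.le]
        gcongr
        exact enorm_mul_le _ _
    _ = ENNReal.ofReal |α - β|⁻¹ * (∫⁻ y, ‖f y‖ₑ ^ p.toReal) * ∫⁻ y, ‖g y‖ₑ ^ p.toReal :=
        lintegral_lintegral_comp_sub_mul (hf.enorm.pow_const _) (hg.enorm.pow_const _) hαβ
    _ = (ENNReal.ofReal (|α - β| ^ (-(1 / p.toReal))) * eLpNorm' f p.toReal volume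
          * eLpNorm' g p.toReal volume) ^ p.toReal := by
        have habs : 0 < |α - β| := abs_pos.mpr (sub_ne_zero.mpr hαβ)
        rw [lintegral_rpow_enorm_eq_rpow_eLpNorm' hq, lintegral_rpow_enorm_eq_rpow_eLpNorm' hq,
          ENNReal.mul_rpow_of_nonneg _ _ hq.le, ENNReal.mul_rpow_of_nonneg _ _ hq.le,
          ENNReal.ofReal_rpow_of_pos (by positivity), ← Real.rpow_mul habs.le,
          neg_mul, one_div_mul_cancel hq.ne', Real.rpow_neg_one]

theorem eLpNorm_eLpNorm_mul_comp_sub_mul_le {p : ℝ≥0∞} (hp0 : p ≠ 0) {f g : ℝ → 𝕜}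
    (hf : StronglyMeasurable f) (hg : StronglyMeasurable g) {α β : ℝ} (hαβ : α ≠ β) :
    eLpNorm (fun x => eLpNorm (fun t => f (x - α * t) * g (x - β * t)) p volume) p volume
      ≤ ENNReal.ofReal (|α - β| ^ (-(1 / p.toReal))) * eLpNorm f p volume * eLpNorm g p volume := by
  rcases eq_or_ne p ∞ with rfl | hp
  · simpa using eLpNorm_eLpNorm_mul_comp_sub_mul_top_le f g α β
  · exact eLpNorm_eLpNorm_mul_comp_sub_mul_le_of_ne_top hp0 hp hf hg hαβ

variable [NormedSpace ℝ 𝕜]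

theorem enorm_integral_mul_le_eLpNorm_mul_eLpNorm {X : Type*} [MeasurableSpace X]
    {μ : Measure X} {p p' : ℝ≥0∞} [HolderConjugate p p'] {F K : X → 𝕜}
    (hF : AEStronglyMeasurable F μ) (hK : AEStronglyMeasurable K μ) :
    ‖∫ t, F t * K t ∂μ‖ₑ ≤ eLpNorm F p μ * eLpNorm K p' μ := by
  refine (enorm_integral_le_lintegral_enorm _).trans ?_
  rw [← eLpNorm_one_eq_lintegral_enorm]
  simpa using eLpNorm_le_eLpNorm_mul_eLpNorm_of_nnnorm hF hK (· * ·) 1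
    (ae_of_all _ fun t => by simpa using nnnorm_mul_le (F t) (K t))

noncomputable def bilinearHilbert (α β : ℝ) (K f g : ℝ → 𝕜) (x : ℝ) : 𝕜 :=
  ∫ t, f (x - α * t) * g (x - β * t) * K t

theorem bilinearHilbert_ae_eq {f f' g g' : ℝ → 𝕜} (hf : f =ᵐ[volume] f') (hg : g =ᵐ[volume] g')
    (α β : ℝ) (K : ℝ → 𝕜) :
    bilinearHilbert α β K f g =ᵐ[volume] bilinearHilbert α β K f' g' := by
  filter_upwards [ae_ae_comp_sub_mul hf α, ae_ae_comp_sub_mul hg β] with x hfx hgx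
  refine integral_congr_ae ?_
  filter_upwards [hfx, hgx] with t hft hgt
  rw [hft, hgt]

theorem eLpNorm_bilinearHilbert_le {p p' : ℝ≥0∞} [HolderConjugate p p'] {α β : ℝ} (hαβ : α ≠ β)
    {K f g : ℝ → 𝕜} (hK : AEStronglyMeasurable K volume) (hK_top : eLpNorm K p' volume ≠ ∞)
    (hf : StronglyMeasurable f) (hg : StronglyMeasurable g) :
    eLpNorm (bilinearHilbert α β K f g) p volume
      ≤ ENNReal.ofReal (|α - β| ^ (-(1 / p.toReal))) *
          eLpNorm f p volume * eLpNorm g p volume * eLpNorm K p' volume := by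
  lift eLpNorm K p' volume to NNReal using hK_top with N hN
  have hpointwise (x : ℝ) : ‖bilinearHilbert α β K f g x‖ₑ
      ≤ N * ‖eLpNorm (fun t => f (x - α * t) * g (x - β * t)) p volume‖ₑ := by
    rw [enorm_eq_self, mul_comm, hN]
    exact enorm_integral_mul_le_eLpNorm_mul_eLpNorm
      ((hf.comp_measurable (by fun_prop)).mul
        (hg.comp_measurable (by fun_prop))).aestronglyMeasurable hK
  calc eLpNorm (bilinearHilbert α β K f g) p volume
      ≤ N * eLpNorm (fun x => eLpNorm (fun t => f (x - α * t) * g (x - β * t)) p volume)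
          p volume :=
        eLpNorm_le_mul_eLpNorm_of_ae_le_mul' (ae_of_all _ hpointwise) p
    _ ≤ N * (ENNReal.ofReal (|α - β| ^ (-(1 / p.toReal))) *
          eLpNorm f p volume * eLpNorm g p volume) := by
        gcongr
        exact eLpNorm_eLpNorm_mul_comp_sub_mul_le (HolderConjugate.ne_zero p p') hf hg hαβ
    _ = ENNReal.ofReal (|α - β| ^ (-(1 / p.toReal))) *
          eLpNorm f p volume * eLpNorm g p volume * N := by
        ring

end

theorem bht_bound_ab_general
    (p p' : ℝ≥0∞) (hpp' : p⁻¹ + p'⁻¹ = 1)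
    (α β : ℝ) (hαβ : α ≠ β) (K f g : ℝ → ℂ)
    (hK : MemLp K p' volume) (hf : MemLp f p volume) (hg : MemLp g p volume) :
    eLpNorm (fun x : ℝ => ∫ t : ℝ, f (x - α * t) * g (x - β * t) * K t) p volume
      ≤ ENNReal.ofReal (|α - β| ^ (-(1 / p.toReal))) *
          eLpNorm f p volume * eLpNorm g p volume * eLpNorm K p' volume := by
  have : HolderConjugate p p' := holderConjugate_iff.mpr hpp'
  obtain ⟨f', hf', hff'⟩ := hf.1
  obtain ⟨g', hg', hgg'⟩ := hg.1
  calc eLpNorm (bilinearHilbert α β K f g) p volume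
      = eLpNorm (bilinearHilbert α β K f' g') p volume :=
        eLpNorm_congr_ae (bilinearHilbert_ae_eq hff' hgg' α β K)
    _ ≤ ENNReal.ofReal (|α - β| ^ (-(1 / p.toReal))) *
          eLpNorm f' p volume * eLpNorm g' p volume * eLpNorm K p' volume :=
        eLpNorm_bilinearHilbert_le hαβ hK.1 hK.eLpNorm_ne_top hf' hg'
    _ = ENNReal.ofReal (|α - β| ^ (-(1 / p.toReal))) *
          eLpNorm f p volume * eLpNorm g p volume * eLpNorm K p' volume := by
        rw [eLpNorm_congr_ae hff', eLpNorm_congr_ae hgg']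

/-- for `K ∈ L^{p'}`, `α ≠ β`, `1 ≤ p ≤ ∞`, and `f, g ∈ L^p`,
`‖∫ f(x-αt)g(x-βt)K(t)dt‖_p ≤ |α-β|^{-1/p} ‖f‖_p ‖g‖_p ‖K‖_{p'}`. -/
theorem bht_bound_ab
    (p p' : ℝ≥0∞) (hp : 1 ≤ p) (hpp' : p⁻¹ + p'⁻¹ = 1)
    (α β : ℝ) (hαβ : α ≠ β) (K f g : ℝ → ℂ)
    (hK : MemLp K p' volume) (hf : MemLp f p volume) (hg : MemLp g p volume) :
    eLpNorm (fun x : ℝ => ∫ t : ℝ, f (x - α * t) * g (x - β * t) * K t) p volume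
      ≤ ENNReal.ofReal (|α - β| ^ (-(1 / p.toReal))) *
          eLpNorm f p volume * eLpNorm g p volume * eLpNorm K p' volume :=
  bht_bound_ab_general p p' hpp' α β hαβ K f g hK hf hg
end

section
/- Let α, β ∈ ℝ with α, β ≠ 0 and α ≠ β, and let 1 ≤ p₀, p₁, p₂, p₃ with 1/p₁ + 1/p₂ + 1/p₀ = 1 + 1/p₃. Then for K ∈ L^{p₀}(ℝ), the bilinear operator H(f,g)(x) = ∫ f(x-αt)g(x-βt)K(t)dt is bounded from L^{p₁}(ℝ) × L^{p₂}(ℝ) to L^{p₃}(ℝ): there is a constant C depending only on α, β, p₀, p₁, p₂ with ‖H(f,g)‖_{p₃} ≤ C ‖K‖_{p₀} ‖f‖_{p₁} ‖g‖_{p₂}. -/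
open MeasureTheory ENNReal
open scoped NNReal

/-!
With `rᵢ = 1/pᵢ`, write `|f| ≤ a ^ r₁`, `|g| ≤ b ^ r₂`, `|K| ≤ c ^ r₀` with `a, b, c ∈ L¹`
(for `pᵢ = ∞` the exponent is `0` and the bound is a constant). Since
`r₁ + r₂ + r₀ = 1 + r₃`, the integrand `a(x-αt)^r₁ b(x-βt)^r₂ c(t)^r₀` splits as
`(ac)^u (bc)^v (ab)^w a^e₁ b^e₂ c^e₀` with nonnegative weights summing to `1` and `u + v + w = r₃`.
Hölder in `t` bounds `H(x)` by the three pair integrals `Φ(x)` to the powers `u, v, w`, times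
the `L¹` norms of the single factors; Hölder in `x` then bounds the `L^{p₃}` norm by
`∏ ‖Φ‖₁ ^ weight`. Any two of the forms `x - αt`, `x - βt`, `t` are independent
(`α, β ≠ 0`, `α ≠ β`), so each `‖Φ‖₁` factors by a linear change of variables into a product
of `L¹` norms of `a, b, c`.
-/

theorem ENNReal.rpow_add_mul_rpow_add_mul_rpow_add (a b c : ℝ≥0∞) {u v w e₁ e₂ e₀ : ℝ}
    (hu : 0 ≤ u) (hv : 0 ≤ v) (hw : 0 ≤ w) (he₁ : 0 ≤ e₁) (he₂ : 0 ≤ e₂) (he₀ : 0 ≤ e₀) :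
    a ^ (u + w + e₁) * b ^ (v + w + e₂) * c ^ (u + v + e₀) =
      (a * c) ^ u * (b * c) ^ v * (a * b) ^ w * a ^ e₁ * b ^ e₂ * c ^ e₀ := by
  rw [rpow_add_of_nonneg _ _ (add_nonneg hu hw) he₁, rpow_add_of_nonneg _ _ hu hw,
    rpow_add_of_nonneg _ _ (add_nonneg hv hw) he₂, rpow_add_of_nonneg _ _ hv hw,
    rpow_add_of_nonneg _ _ (add_nonneg hu hv) he₀, rpow_add_of_nonneg _ _ hu hv,
    mul_rpow_of_nonneg _ _ hu, mul_rpow_of_nonneg _ _ hv, mul_rpow_of_nonneg _ _ hw]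
  ring

section

variable {X : Type*} [MeasurableSpace X] {μ : Measure X}

theorem eLpNorm_ennreal_mul_const {f : X → ℝ≥0∞} (hf : AEMeasurable f μ) (c p : ℝ≥0∞) :
    eLpNorm (fun x => f x * c) p μ = eLpNorm f p μ * c := by
  rcases eq_or_ne p 0 with rfl | hp0
  · simp
  rcases eq_or_ne p ∞ with rfl | hptop
  · simp only [eLpNorm_exponent_top, eLpNormEssSup, enorm_eq_self, mul_comm _ c]
    exact essSup_const_mul
  have hq := toReal_pos hp0 hptop
  simp only [eLpNorm_eq_lintegral_rpow_enorm_toReal hp0 hptop, enorm_eq_self,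
    mul_rpow_of_nonneg _ _ hq.le]
  rw [lintegral_mul_const'' _ (hf.pow_const _), mul_rpow_of_nonneg _ _ (by positivity),
    ← rpow_mul, mul_one_div_cancel hq.ne', rpow_one]

theorem eLpNorm_prod_rpow_le {ι : Type*} (s : Finset ι) {f : ι → X → ℝ≥0∞}
    (hf : ∀ i ∈ s, AEMeasurable (f i) μ) {θ : ι → ℝ} (hθ : ∀ i ∈ s, 0 ≤ θ i) {p : ℝ≥0∞}
    (hp : (p⁻¹).toReal = ∑ i ∈ s, θ i) :
    eLpNorm (fun x => ∏ i ∈ s, f i x ^ θ i) p μ ≤ ∏ i ∈ s, (∫⁻ x, f i x ∂μ) ^ θ i := by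
  rcases eq_or_ne p 0 with rfl | hp0
  · simp
  rcases eq_or_ne p ∞ with rfl | hptop
  · have hθ0 : ∀ i ∈ s, θ i = 0 :=
      (Finset.sum_eq_zero_iff_of_nonneg hθ).1 (by simpa using hp.symm)
    have hone (g : ι → ℝ≥0∞) : ∏ i ∈ s, g i ^ θ i = 1 :=
      Finset.prod_eq_one fun i hi => by rw [hθ0 i hi, rpow_zero]
    simp only [hone, eLpNorm_exponent_top]
    exact eLpNormEssSup_le_of_ae_enorm_bound (ae_of_all _ fun _ => le_rfl)
  have hq := toReal_pos hp0 hptop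
  have hweights : ∑ i ∈ s, θ i * p.toReal = 1 := by
    rw [← Finset.sum_mul, ← hp, toReal_inv, inv_mul_cancel₀ hq.ne']
  calc eLpNorm (fun x => ∏ i ∈ s, f i x ^ θ i) p μ
      = (∫⁻ x, ∏ i ∈ s, f i x ^ (θ i * p.toReal) ∂μ) ^ (p⁻¹).toReal := by
        simp only [eLpNorm_eq_lintegral_rpow_enorm_toReal hp0 hptop, enorm_eq_self,
          ← prod_rpow_of_nonneg hq.le, ← rpow_mul, one_div, toReal_inv]
    _ ≤ (∏ i ∈ s, (∫⁻ x, f i x ∂μ) ^ (θ i * p.toReal)) ^ (p⁻¹).toReal := by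
        gcongr
        exact lintegral_prod_norm_pow_le s hf hweights fun i hi => mul_nonneg (hθ i hi) hq.le
    _ = ∏ i ∈ s, (∫⁻ x, f i x ∂μ) ^ θ i := by
        rw [← prod_rpow_of_nonneg toReal_nonneg]
        refine Finset.prod_congr rfl fun i _ => ?_
        rw [← rpow_mul, toReal_inv, mul_assoc, mul_inv_cancel₀ hq.ne', mul_one]

theorem lintegral_rpow_mul_rpow_mul_rpow_le {A B C : X → ℝ≥0∞} (hA : AEMeasurable A μ)
    (hB : AEMeasurable B μ) (hC : AEMeasurable C μ) {u v w e₁ e₂ e₀ : ℝ}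
    (hu : 0 ≤ u) (hv : 0 ≤ v) (hw : 0 ≤ w) (he₁ : 0 ≤ e₁) (he₂ : 0 ≤ e₂) (he₀ : 0 ≤ e₀)
    (hsum : u + v + w + e₁ + e₂ + e₀ = 1) :
    ∫⁻ x, A x ^ (u + w + e₁) * B x ^ (v + w + e₂) * C x ^ (u + v + e₀) ∂μ ≤
      (∫⁻ x, A x * C x ∂μ) ^ u * (∫⁻ x, B x * C x ∂μ) ^ v * (∫⁻ x, A x * B x ∂μ) ^ w *
        (∫⁻ x, A x ∂μ) ^ e₁ * (∫⁻ x, B x ∂μ) ^ e₂ * (∫⁻ x, C x ∂μ) ^ e₀ := by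
  simp only [rpow_add_mul_rpow_add_mul_rpow_add _ _ _ hu hv hw he₁ he₂ he₀]
  simpa [Fin.prod_univ_six] using lintegral_prod_norm_pow_le (μ := μ) Finset.univ
    (f := ![fun x => A x * C x, fun x => B x * C x, fun x => A x * B x, A, B, C])
    (p := ![u, v, w, e₁, e₂, e₀])
    (fun i _ => by fin_cases i; exacts [hA.mul hC, hB.mul hC, hA.mul hB, hA, hB, hC])
    (by simpa [Fin.sum_univ_six] using hsum)
    (fun i _ => by fin_cases i <;> simpa)

theorem MeasureTheory.MemLp.exists_ae_enorm_le_mul_rpow {ε : Type*} [TopologicalSpace ε]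
    [ContinuousENorm ε] {f : X → ε} {p : ℝ≥0∞} (hf : MemLp f p μ)
    (hp : p ≠ 0) :
    ∃ (a : X → ℝ≥0∞) (m : ℝ≥0), Measurable a ∧ (∀ᵐ x ∂μ, ‖f x‖ₑ ≤ m * a x ^ (p⁻¹).toReal) ∧
      eLpNorm f p μ = m * (∫⁻ x, a x ∂μ) ^ (p⁻¹).toReal := by
  rcases eq_or_ne p ∞ with rfl | hptop
  · refine ⟨0, (eLpNorm f ∞ μ).toNNReal, measurable_const, ?_, ?_⟩ <;>
      simp only [coe_toNNReal hf.eLpNorm_ne_top, inv_top, toReal_zero, rpow_zero, mul_one]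
    exact ae_le_eLpNormEssSup
  have hq := toReal_pos hp hptop
  have hae : AEMeasurable (fun x => ‖f x‖ₑ ^ p.toReal) μ :=
    hf.aestronglyMeasurable.enorm.pow_const _
  refine ⟨hae.mk _, 1, hae.measurable_mk, ?_, ?_⟩
  · filter_upwards [hae.ae_eq_mk] with x hx
    rw [← hx, ← rpow_mul, toReal_inv, mul_inv_cancel₀ hq.ne', rpow_one, coe_one, one_mul]
  · rw [eLpNorm_eq_lintegral_rpow_enorm_toReal hp hptop, lintegral_congr_ae hae.ae_eq_mk,
      coe_one, one_mul, toReal_inv, one_div]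

end

theorem ae_comp_sub_mul {P : ℝ → Prop} (h : ∀ᵐ y, P y) {c : ℝ} (hc : c ≠ 0) (x : ℝ) :
    ∀ᵐ t, P (x - c * t) :=
  (((volume : Measure ℝ).measurePreserving_sub_left x).quasiMeasurePreserving.comp
    (Measure.quasiMeasurePreserving_smul volume hc)).ae h

theorem lintegral_comp_sub_mul {P : ℝ → ℝ≥0∞} (hP : Measurable P) {c : ℝ} (hc : c ≠ 0)
    (x : ℝ) : ∫⁻ t, P (x - c * t) = ENNReal.ofReal |c|⁻¹ * ∫⁻ y, P y := by
  calc ∫⁻ t, P (x - c * t)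
      = ∫⁻ s, P (x - s) ∂Measure.map (c * ·) volume :=
        (lintegral_map (hP.comp (measurable_const_sub x)) (measurable_const_mul c)).symm
    _ = ENNReal.ofReal |c|⁻¹ * ∫⁻ y, P y := by
        rw [Real.map_volume_mul_left hc, lintegral_smul_measure, abs_inv, smul_eq_mul,
          lintegral_sub_left_eq_self]

theorem lintegral_lintegral_comp_sub_mul_mul {P Q : ℝ → ℝ≥0∞} (hP : Measurable P)
    (hQ : Measurable Q) (c : ℝ) :
    ∫⁻ x, ∫⁻ t, P (x - c * t) * Q t = (∫⁻ y, P y) * ∫⁻ y, Q y := by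
  rw [lintegral_lintegral_swap ((hP.comp (measurable_fst.sub (measurable_snd.const_mul c))).mul
    (hQ.comp measurable_snd)).aemeasurable, ← lintegral_const_mul _ hQ]
  refine lintegral_congr fun t => ?_
  rw [lintegral_mul_const _ (by fun_prop), lintegral_sub_right_eq_self]

theorem lintegral_lintegral_comp_sub_mul_mul_comp_sub_mul {P Q : ℝ → ℝ≥0∞} (hP : Measurable P)
    (hQ : Measurable Q) {a b : ℝ} (hab : a ≠ b) :
    ∫⁻ x, ∫⁻ t, P (x - a * t) * Q (x - b * t) =
      ENNReal.ofReal |a - b|⁻¹ * ((∫⁻ y, P y) * ∫⁻ y, Q y) := by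
  have hshift (t : ℝ) : ∫⁻ x, P (x - a * t) * Q (x - b * t) = ∫⁻ y, P y * Q (y - (b - a) * t) := by
    rw [← lintegral_sub_right_eq_self (fun y => P y * Q (y - (b - a) * t)) (a * t)]
    congr! 4 with x
    ring
  rw [lintegral_lintegral_swap ((hP.comp (measurable_fst.sub (measurable_snd.const_mul a))).mul
    (hQ.comp (measurable_fst.sub (measurable_snd.const_mul b)))).aemeasurable]
  simp_rw [hshift]
  rw [lintegral_lintegral_swap ((hP.comp measurable_snd).mul
    (hQ.comp (measurable_snd.sub (measurable_fst.const_mul _)))).aemeasurable,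
    ← lintegral_mul_const _ hP, ← lintegral_const_mul _ (by fun_prop), abs_sub_comm]
  refine lintegral_congr fun y => ?_
  rw [lintegral_const_mul _ (by fun_prop), lintegral_comp_sub_mul hQ (sub_ne_zero.2 hab.symm)]
  ring

theorem lintegral_comp_sub_mul_rpow_le {α β : ℝ} (hα : α ≠ 0) (hβ : β ≠ 0)
    {a b c : ℝ → ℝ≥0∞} (ha : Measurable a) (hb : Measurable b) (hc : Measurable c)
    {u v w e₁ e₂ e₀ : ℝ}
    (hu : 0 ≤ u) (hv : 0 ≤ v) (hw : 0 ≤ w) (he₁ : 0 ≤ e₁) (he₂ : 0 ≤ e₂) (he₀ : 0 ≤ e₀)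
    (hsum : u + v + w + e₁ + e₂ + e₀ = 1) (x : ℝ) :
    ∫⁻ t, a (x - α * t) ^ (u + w + e₁) * b (x - β * t) ^ (v + w + e₂) * c t ^ (u + v + e₀) ≤
      (∫⁻ t, a (x - α * t) * c t) ^ u * (∫⁻ t, b (x - β * t) * c t) ^ v *
        (∫⁻ t, a (x - α * t) * b (x - β * t)) ^ w *
        ((ENNReal.ofReal |α|⁻¹ * ∫⁻ y, a y) ^ e₁ * (ENNReal.ofReal |β|⁻¹ * ∫⁻ y, b y) ^ e₂ *
          (∫⁻ y, c y) ^ e₀) := by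
  have := lintegral_rpow_mul_rpow_mul_rpow_le (μ := volume) (A := fun t => a (x - α * t))
    (B := fun t => b (x - β * t)) (by fun_prop) (by fun_prop) hc.aemeasurable
    hu hv hw he₁ he₂ he₀ hsum
  rw [lintegral_comp_sub_mul ha hα, lintegral_comp_sub_mul hb hβ] at this
  exact this.trans_eq (by ring)

theorem eLpNorm_lintegral_comp_sub_mul_le {α β : ℝ} (hα : α ≠ 0) (hβ : β ≠ 0) (hαβ : α ≠ β)
    {a b c : ℝ → ℝ≥0∞} (ha : Measurable a) (hb : Measurable b) (hc : Measurable c)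
    {p : ℝ≥0∞} {u v w e₁ e₂ e₀ : ℝ}
    (hu : 0 ≤ u) (hv : 0 ≤ v) (hw : 0 ≤ w) (he₁ : 0 ≤ e₁) (he₂ : 0 ≤ e₂) (he₀ : 0 ≤ e₀)
    (hp : (p⁻¹).toReal = u + v + w) (hsum : u + v + w + e₁ + e₂ + e₀ = 1) :
    eLpNorm (fun x => ∫⁻ t, a (x - α * t) ^ (u + w + e₁) * b (x - β * t) ^ (v + w + e₂) *
        c t ^ (u + v + e₀)) p volume ≤
      ENNReal.ofReal (|α|⁻¹ ^ e₁ * |β|⁻¹ ^ e₂ * |α - β|⁻¹ ^ w) * (∫⁻ y, a y) ^ (u + w + e₁) *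
        (∫⁻ y, b y) ^ (v + w + e₂) * (∫⁻ y, c y) ^ (u + v + e₀) := by
  set Φ₁ : ℝ → ℝ≥0∞ := fun x => ∫⁻ t, a (x - α * t) * c t
  set Φ₂ : ℝ → ℝ≥0∞ := fun x => ∫⁻ t, b (x - β * t) * c t
  set Φ₃ : ℝ → ℝ≥0∞ := fun x => ∫⁻ t, a (x - α * t) * b (x - β * t)
  have hΦ₁ : Measurable Φ₁ := by fun_prop
  have hΦ₂ : Measurable Φ₂ := by fun_prop
  have hΦ₃ : Measurable Φ₃ := by fun_prop
  set S := (ENNReal.ofReal |α|⁻¹ * ∫⁻ y, a y) ^ e₁ * (ENNReal.ofReal |β|⁻¹ * ∫⁻ y, b y) ^ e₂ *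
    (∫⁻ y, c y) ^ e₀ with hS
  have hk : ENNReal.ofReal (|α|⁻¹ ^ e₁ * |β|⁻¹ ^ e₂ * |α - β|⁻¹ ^ w) =
      ENNReal.ofReal |α|⁻¹ ^ e₁ * ENNReal.ofReal |β|⁻¹ ^ e₂ * ENNReal.ofReal |α - β|⁻¹ ^ w := by
    rw [ofReal_mul (by positivity), ofReal_mul (by positivity), ofReal_rpow_of_nonneg
      (by positivity) he₁, ofReal_rpow_of_nonneg (by positivity) he₂,
      ofReal_rpow_of_nonneg (by positivity) hw]
  calc _ ≤ eLpNorm (fun x => Φ₁ x ^ u * Φ₂ x ^ v * Φ₃ x ^ w * S) p volume :=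
        eLpNorm_mono_enorm fun x => by
          simpa only [enorm_eq_self] using
            lintegral_comp_sub_mul_rpow_le hα hβ ha hb hc hu hv hw he₁ he₂ he₀ hsum x
    _ = eLpNorm (fun x => Φ₁ x ^ u * Φ₂ x ^ v * Φ₃ x ^ w) p volume * S :=
        eLpNorm_ennreal_mul_const
          ((hΦ₁.pow_const u).mul (hΦ₂.pow_const v) |>.mul (hΦ₃.pow_const w)).aemeasurable S p
    _ ≤ ((∫⁻ x, Φ₁ x) ^ u * (∫⁻ x, Φ₂ x) ^ v * (∫⁻ x, Φ₃ x) ^ w) * S := by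
        gcongr
        simpa [Fin.prod_univ_three, mul_assoc] using eLpNorm_prod_rpow_le Finset.univ
          (f := ![Φ₁, Φ₂, Φ₃]) (θ := ![u, v, w]) (μ := volume) (p := p)
          (fun i _ => by fin_cases i; exacts [hΦ₁.aemeasurable, hΦ₂.aemeasurable,
            hΦ₃.aemeasurable])
          (fun i _ => by fin_cases i; exacts [hu, hv, hw])
          (by simpa [Fin.sum_univ_three] using hp)
    _ = ENNReal.ofReal |α|⁻¹ ^ e₁ * ENNReal.ofReal |β|⁻¹ ^ e₂ * ENNReal.ofReal |α - β|⁻¹ ^ w *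
          (((∫⁻ y, a y) * ∫⁻ y, c y) ^ u * ((∫⁻ y, b y) * ∫⁻ y, c y) ^ v *
            ((∫⁻ y, a y) * ∫⁻ y, b y) ^ w * (∫⁻ y, a y) ^ e₁ * (∫⁻ y, b y) ^ e₂ *
            (∫⁻ y, c y) ^ e₀) := by
        rw [lintegral_lintegral_comp_sub_mul_mul ha hc, lintegral_lintegral_comp_sub_mul_mul hb hc,
          lintegral_lintegral_comp_sub_mul_mul_comp_sub_mul ha hb hαβ, hS,
          mul_rpow_of_nonneg (ENNReal.ofReal _) _ hw, mul_rpow_of_nonneg _ _ he₁,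
          mul_rpow_of_nonneg _ _ he₂]
        ring
    _ = _ := by
        rw [← rpow_add_mul_rpow_add_mul_rpow_add _ _ _ hu hv hw he₁ he₂ he₀, hk]
        ring

theorem enorm_integral_comp_sub_mul_le {𝕜 : Type*} [NormedRing 𝕜] [NormedSpace ℝ 𝕜]
    {α β : ℝ} (hα : α ≠ 0) (hβ : β ≠ 0) {f g K : ℝ → 𝕜} {F G W : ℝ → ℝ≥0∞}
    (hf : ∀ᵐ y, ‖f y‖ₑ ≤ F y) (hg : ∀ᵐ y, ‖g y‖ₑ ≤ G y) (hK : ∀ᵐ y, ‖K y‖ₑ ≤ W y) (x : ℝ) :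
    ‖∫ t, f (x - α * t) * g (x - β * t) * K t‖ₑ ≤
      ∫⁻ t, F (x - α * t) * G (x - β * t) * W t := by
  refine (enorm_integral_le_lintegral_enorm _).trans (lintegral_mono_ae ?_)
  filter_upwards [ae_comp_sub_mul hf hα x, ae_comp_sub_mul hg hβ x, hK] with t hft hgt hKt
  calc ‖f (x - α * t) * g (x - β * t) * K t‖ₑ
      ≤ ‖f (x - α * t)‖ₑ * ‖g (x - β * t)‖ₑ * ‖K t‖ₑ := by
        simp only [enorm_eq_nnnorm, ← coe_mul, coe_le_coe]
        exact (nnnorm_mul_le _ _).trans (mul_le_mul_left (nnnorm_mul_le _ _) _)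
    _ ≤ F (x - α * t) * G (x - β * t) * W t := by gcongr

theorem exists_young_weights {r₀ r₁ r₂ r₃ : ℝ} (h₀ : 0 ≤ r₀) (h₁ : 0 ≤ r₁) (h₂ : 0 ≤ r₂)
    (h₃ : 0 ≤ r₃) (h₀' : r₀ ≤ 1) (h₁' : r₁ ≤ 1) (h₂' : r₂ ≤ 1) (h₃' : r₃ ≤ 1)
    (hsum : r₁ + r₂ + r₀ = 1 + r₃) :
    ∃ u v w e₁ e₂ e₀ : ℝ, 0 ≤ u ∧ 0 ≤ v ∧ 0 ≤ w ∧ 0 ≤ e₁ ∧ 0 ≤ e₂ ∧ 0 ≤ e₀ ∧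
      r₁ = u + w + e₁ ∧ r₂ = v + w + e₂ ∧ r₀ = u + v + e₀ ∧ r₃ = u + v + w := by
  -- `e₁ ≥ 0` and `e₂ ≥ 0` force `v ≥ r₃ - r₁` and `u ≥ r₃ - r₂`: take the least such `u, v`.
  refine ⟨max 0 (r₃ - r₂), max 0 (r₃ - r₁), r₃ - max 0 (r₃ - r₂) - max 0 (r₃ - r₁),
    r₁ - r₃ + max 0 (r₃ - r₁), r₂ - r₃ + max 0 (r₃ - r₂),
    r₀ - max 0 (r₃ - r₂) - max 0 (r₃ - r₁), ?_⟩
  rcases max_cases 0 (r₃ - r₂) with ⟨hu, _⟩ | ⟨hu, _⟩ <;>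
    rcases max_cases 0 (r₃ - r₁) with ⟨hv, _⟩ | ⟨hv, _⟩ <;> rw [hu, hv] <;>
    refine ⟨?_, ?_, ?_, ?_, ?_, ?_, ?_, ?_, ?_, ?_⟩ <;> linarith

theorem eLpNorm_integral_comp_sub_mul_le {𝕜 : Type*} [NormedRing 𝕜] [NormedSpace ℝ 𝕜]
    {α β : ℝ} (hα : α ≠ 0) (hβ : β ≠ 0) (hαβ : α ≠ β) {p₀ p₁ p₂ p₃ : ℝ≥0∞}
    (hp₀ : p₀ ≠ 0) (hp₁ : p₁ ≠ 0) (hp₂ : p₂ ≠ 0) {u v w e₁ e₂ e₀ : ℝ}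
    (hu : 0 ≤ u) (hv : 0 ≤ v) (hw : 0 ≤ w) (he₁ : 0 ≤ e₁) (he₂ : 0 ≤ e₂) (he₀ : 0 ≤ e₀)
    (h₁ : (p₁⁻¹).toReal = u + w + e₁) (h₂ : (p₂⁻¹).toReal = v + w + e₂)
    (h₀ : (p₀⁻¹).toReal = u + v + e₀) (h₃ : (p₃⁻¹).toReal = u + v + w)
    (hsum : u + v + w + e₁ + e₂ + e₀ = 1) {K f g : ℝ → 𝕜}
    (hK : MemLp K p₀) (hf : MemLp f p₁) (hg : MemLp g p₂) :
    eLpNorm (fun x => ∫ t, f (x - α * t) * g (x - β * t) * K t) p₃ volume ≤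
      ENNReal.ofReal (|α|⁻¹ ^ e₁ * |β|⁻¹ ^ e₂ * |α - β|⁻¹ ^ w) * eLpNorm K p₀ volume *
        eLpNorm f p₁ volume * eLpNorm g p₂ volume := by
  obtain ⟨a, m₁, ha, hfa, hf_eq⟩ := hf.exists_ae_enorm_le_mul_rpow hp₁
  obtain ⟨b, m₂, hb, hgb, hg_eq⟩ := hg.exists_ae_enorm_le_mul_rpow hp₂
  obtain ⟨c, m₀, hc, hKc, hK_eq⟩ := hK.exists_ae_enorm_le_mul_rpow hp₀
  rw [h₁] at hfa hf_eq
  rw [h₂] at hgb hg_eq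
  rw [h₀] at hKc hK_eq
  have hpointwise (x : ℝ) : ‖∫ t, f (x - α * t) * g (x - β * t) * K t‖ₑ ≤
      (m₁ * m₂ * m₀ : ℝ≥0) * ‖∫⁻ t, a (x - α * t) ^ (u + w + e₁) * b (x - β * t) ^ (v + w + e₂) *
        c t ^ (u + v + e₀)‖ₑ := by
    refine (enorm_integral_comp_sub_mul_le hα hβ hfa hgb hKc x).trans_eq ?_
    rw [enorm_eq_self, ← lintegral_const_mul' _ _ coe_ne_top]
    congr 1 with t
    push_cast
    ring
  calc _ ≤ (m₁ * m₂ * m₀ : ℝ≥0) • eLpNorm (fun x => ∫⁻ t, a (x - α * t) ^ (u + w + e₁) *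
          b (x - β * t) ^ (v + w + e₂) * c t ^ (u + v + e₀)) p₃ volume :=
        eLpNorm_le_nnreal_smul_eLpNorm_of_ae_le_mul' (ae_of_all _ hpointwise) p₃
    _ ≤ (m₁ * m₂ * m₀ : ℝ≥0) • (ENNReal.ofReal (|α|⁻¹ ^ e₁ * |β|⁻¹ ^ e₂ * |α - β|⁻¹ ^ w) *
          (∫⁻ y, a y) ^ (u + w + e₁) * (∫⁻ y, b y) ^ (v + w + e₂) *
          (∫⁻ y, c y) ^ (u + v + e₀)) := by
        gcongr
        exact eLpNorm_lintegral_comp_sub_mul_le hα hβ hαβ ha hb hc hu hv hw he₁ he₂ he₀ h₃ hsum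
    _ = _ := by
        rw [hf_eq, hg_eq, hK_eq, ENNReal.smul_def, smul_eq_mul]
        push_cast
        ring

/-- bilinear Young inequality: for `α, β ≠ 0`, `α ≠ β`, exponents
`1 ≤ p₀, p₁, p₂, p₃ ≤ ∞` with `1/p₁ + 1/p₂ + 1/p₀ = 1 + 1/p₃`, there is a
constant `C = C(α, β, p₀, p₁, p₂)` such that for every `K ∈ L^{p₀}`,
`f ∈ L^{p₁}`, `g ∈ L^{p₂}`,
`‖∫ f(x-αt)g(x-βt)K(t)dt‖_{p₃} ≤ C ‖K‖_{p₀} ‖f‖_{p₁} ‖g‖_{p₂}`. -/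
theorem bilinear_young
    (α β : ℝ) (hα : α ≠ 0) (hβ : β ≠ 0) (hαβ : α ≠ β)
    (p₀ p₁ p₂ p₃ : ℝ≥0∞) (hp₀ : 1 ≤ p₀) (hp₁ : 1 ≤ p₁) (hp₂ : 1 ≤ p₂) (hp₃ : 1 ≤ p₃)
    (hsum : p₁⁻¹ + p₂⁻¹ + p₀⁻¹ = 1 + p₃⁻¹) :
    ∃ C : ℝ, 0 < C ∧ ∀ K f g : ℝ → ℂ,
      MemLp K p₀ volume → MemLp f p₁ volume → MemLp g p₂ volume →
      eLpNorm (fun x : ℝ => ∫ t : ℝ, f (x - α * t) * g (x - β * t) * K t) p₃ volume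
        ≤ ENNReal.ofReal C * eLpNorm K p₀ volume * eLpNorm f p₁ volume *
            eLpNorm g p₂ volume := by
  have hne_zero {p : ℝ≥0∞} (hp : 1 ≤ p) : p ≠ 0 := (zero_lt_one.trans_le hp).ne'
  have hle_one {p : ℝ≥0∞} (hp : 1 ≤ p) : (p⁻¹).toReal ≤ 1 :=
    toReal_le_of_le_ofReal zero_le_one (by simpa using ENNReal.inv_le_one.2 hp)
  have hsum_real : (p₁⁻¹).toReal + (p₂⁻¹).toReal + (p₀⁻¹).toReal = 1 + (p₃⁻¹).toReal := by
    have hfin {p : ℝ≥0∞} (hp : 1 ≤ p) : p⁻¹ ≠ ∞ := inv_ne_top.2 (hne_zero hp)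
    rw [← toReal_add (hfin hp₁) (hfin hp₂), ← toReal_add (by simp [hfin hp₁, hfin hp₂])
      (hfin hp₀), hsum, toReal_add one_ne_top (hfin hp₃), toReal_one]
  obtain ⟨u, v, w, e₁, e₂, e₀, hu, hv, hw, he₁, he₂, he₀, h₁, h₂, h₀, h₃⟩ :=
    exists_young_weights toReal_nonneg toReal_nonneg toReal_nonneg toReal_nonneg
      (hle_one hp₀) (hle_one hp₁) (hle_one hp₂) (hle_one hp₃) hsum_real
  have hC : 0 < |α|⁻¹ ^ e₁ * |β|⁻¹ ^ e₂ * |α - β|⁻¹ ^ w := by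
    have := sub_ne_zero.2 hαβ
    positivity
  refine ⟨_, hC, fun K f g hK hf hg => ?_⟩
  exact eLpNorm_integral_comp_sub_mul_le hα hβ hαβ (hne_zero hp₀) (hne_zero hp₁) (hne_zero hp₂)
    hu hv hw he₁ he₂ he₀ h₁ h₂ h₀ h₃ (by linarith) hK hf hg
end
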